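/- arXiv:2006.05607 — 2 statements merged into one kernel-verified Lean document; each statement's English description precedes it below -/
import Mathlib

section
/- Let Q = T[H_1, ..., H_t] be a strongly connected semicomplete composition. Then a vertex v ∈ V(H_i) is a 3-king of Q if and only if u_i is a 3-king of T. In particular, Q has a 3-king. -/
/-- There is a directed walk (equivalently, path) of length at most `k` from `x` to `y`. -/
def KReach {V : Type*} (A : V → V → Prop) (k : ℕ) (x y : V) : Prop :=
  ∃ n : ℕ, n ≤ k ∧ ∃ f : ℕ → V, f 0 = x ∧ f n = y ∧ ∀ i < n, A (f i) (f (i + 1))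

/-- `x` is a `k`-king: it reaches every vertex by a path of length at most `k`. -/
def IsKKing {V : Type*} (A : V → V → Prop) (k : ℕ) (x : V) : Prop :=
  ∀ y : V, KReach A k x y

/-- A strict `k`-king: a `k`-king with some vertex at distance exactly `k`. -/
def IsStrictKKing {V : Type*} (A : V → V → Prop) (k : ℕ) (x : V) : Prop :=
  IsKKing A k x ∧ ∃ y : V, ¬ KReach A (k - 1) x y

/-- Strong connectivity of a digraph. -/
def Strong {V : Type*} (A : V → V → Prop) : Prop :=
  ∀ x y : V, ∃ k : ℕ, KReach A k x y

/-- Semicomplete digraph: at least one arc between any two distinct vertices. -/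
def Semicomplete {V : Type*} (A : V → V → Prop) : Prop :=
  ∀ x y : V, x ≠ y → A x y ∨ A y x

/-- Tournament: exactly one arc between any two distinct vertices, no loops. -/
def IsTournament {V : Type*} (A : V → V → Prop) : Prop :=
  Irreflexive A ∧ ∀ x y : V, x ≠ y → (A x y ↔ ¬ A y x)

/-- Out-degree of a vertex. -/
noncomputable def outDeg {V : Type*} (A : V → V → Prop) (x : V) : ℕ :=
  Set.ncard {y | A x y}

/-- There is a directed cycle of length exactly `k` through `x`. -/
def CycleThrough {V : Type*} (A : V → V → Prop) (k : ℕ) (x : V) : Prop :=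
  ∃ f : ℕ → V, f 0 = x ∧ f k = x ∧ (∀ i < k, A (f i) (f (i + 1))) ∧
    ∀ i j, i < k → j < k → f i = f j → i = j

/-- `x` belongs to a directed cycle of length at most `k`. -/
def OnShortCycle {V : Type*} (A : V → V → Prop) (k : ℕ) (x : V) : Prop :=
  ∃ n : ℕ, 2 ≤ n ∧ n ≤ k ∧ CycleThrough A n x

/-- `AQ` (on `W`) is the composition `T[H_1, …, H_t]` of digraphs over the digraph `AT`
(on index type `ι`), where the fiber of `π` over `i` is the vertex set of `H_i`
(each fiber is nonempty since `π` is surjective), the arcs of `H_i` are the arcs of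
`AQ` inside the fiber over `i`, and arcs between different fibers are determined by `AT`. -/
structure IsComposition {ι W : Type*} (AT : ι → ι → Prop) (AQ : W → W → Prop)
    (π : W → ι) : Prop where
  surj : Function.Surjective π
  cross : ∀ x y : W, π x ≠ π y → (AQ x y ↔ AT (π x) (π y))

/-- The digraph `H_i`: the induced subdigraph on the fiber of `π` over `i`. -/
def FiberArc {ι W : Type*} (AQ : W → W → Prop) (π : W → ι) (i : ι) :
    {w : W // π w = i} → {w : W // π w = i} → Prop :=
  fun a b => AQ a.1 b.1

/-- The induced subdigraph on the vertices satisfying `P`. -/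
def DelArc {V : Type*} (A : V → V → Prop) (P : V → Prop) :
    {v : V // P v} → {v : V // P v} → Prop :=
  fun a b => A a.1 b.1

/-- `{v}` is a `k`-absorbent set: every other vertex reaches `v` in at most `k` steps. -/
def SingletonAbsorbent {V : Type*} (A : V → V → Prop) (k : ℕ) (v : V) : Prop :=
  ∀ x : V, x ≠ v → KReach A k x v

/-- A quasi-kernel: an independent set `K` such that every vertex outside `K`
reaches some vertex of `K` by a path of length at most 2. -/
def QuasiKernel {V : Type*} (A : V → V → Prop) (K : Set V) : Prop :=
  (∀ x ∈ K, ∀ y ∈ K, x ≠ y → ¬ A x y) ∧ ∀ x ∉ K, ∃ y ∈ K, KReach A 2 x y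

/-- A `k`-kernel: a `k`-independent and `(k-1)`-absorbent set. -/
def KKernel {V : Type*} (A : V → V → Prop) (k : ℕ) (K : Set V) : Prop :=
  (∀ x ∈ K, ∀ y ∈ K, x ≠ y → ¬ KReach A (k - 1) x y) ∧
    ∀ x ∉ K, ∃ y ∈ K, KReach A (k - 1) x y

/-!
Arcs between distinct fibres of `Q` are exactly the arcs of `T`. Hence a walk in `Q` projects
to a walk in `T` that is no longer, and a walk in `T` between distinct vertices lifts to a walk of
the same length between any two prescribed endpoints in the corresponding fibres; this settles
the targets outside the fibre of `v`. For a target in the fibre of `v`, use that every vertex `u`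
of a strong semicomplete digraph on at least two vertices lies on a closed walk `u → a ⇝ u` of
length at most three, and lift it through the fibre of `a`. A vertex of maximum out-degree in a
semicomplete digraph is a 2-king, which gives the existence of a 3-king.
-/

section KReach

variable {V : Type*} {A : V → V → Prop}

theorem kReach_zero_iff {x y : V} : KReach A 0 x y ↔ x = y := by
  constructor
  · rintro ⟨n, hn, f, hf0, hfn, -⟩
    obtain rfl : n = 0 := Nat.le_zero.mp hn
    exact hf0 ▸ hfn
  · rintro rfl
    exact ⟨0, le_rfl, fun _ => x, rfl, rfl, fun _ hi => absurd hi (Nat.not_lt_zero _)⟩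

theorem KReach.mono {k m : ℕ} (h : k ≤ m) {x y : V} (hxy : KReach A k x y) : KReach A m x y :=
  let ⟨n, hn, hf⟩ := hxy
  ⟨n, hn.trans h, hf⟩

theorem kReach_refl (k : ℕ) (x : V) : KReach A k x x :=
  (kReach_zero_iff.mpr rfl).mono (Nat.zero_le k)

theorem KReach.cons {k : ℕ} {x y z : V} (hxy : A x y) (hyz : KReach A k y z) :
    KReach A (k + 1) x z := by
  obtain ⟨n, hn, f, rfl, hfn, harc⟩ := hyz
  refine ⟨n + 1, Nat.succ_le_succ hn, fun i => Nat.casesOn i x f, rfl, hfn, ?_⟩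
  rintro (_ | i) hi
  · exact hxy
  · exact harc i (Nat.lt_of_succ_lt_succ hi)

theorem kReach_one_of_arc {x y : V} (h : A x y) : KReach A 1 x y :=
  KReach.cons h (kReach_refl 0 y)

theorem kReach_succ_iff {k : ℕ} {x z : V} :
    KReach A (k + 1) x z ↔ x = z ∨ ∃ y, A x y ∧ KReach A k y z := by
  constructor
  · rintro ⟨_ | n, hn, f, hf0, hfn, harc⟩
    · exact Or.inl (hf0 ▸ hfn)
    · refine Or.inr ⟨f 1, hf0 ▸ harc 0 n.succ_pos, n, Nat.le_of_succ_le_succ hn,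
        fun i => f (i + 1), rfl, hfn, fun i hi => harc (i + 1) (Nat.succ_lt_succ hi)⟩
  · rintro (rfl | ⟨y, hxy, hyz⟩)
    · exact kReach_refl _ _
    · exact KReach.cons hxy hyz

theorem KReach.mem_of_forall_arc {S : Set V} (hS : ∀ a ∈ S, ∀ b, A a b → b ∈ S) :
    ∀ {k : ℕ} {x y : V}, KReach A k x y → x ∈ S → y ∈ S
  | 0, _, _, h, hx => kReach_zero_iff.mp h ▸ hx
  | _ + 1, _, _, h, hx => by
    rcases kReach_succ_iff.mp h with rfl | ⟨z, hxz, hzy⟩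
    · exact hx
    · exact hzy.mem_of_forall_arc hS (hS _ hx z hxz)

theorem KReach.exists_arc_leaving {S : Set V} {k : ℕ} {x y : V} (h : KReach A k x y)
    (hx : x ∈ S) (hy : y ∉ S) : ∃ a ∈ S, ∃ b ∉ S, A a b := by
  by_contra! hS
  exact hy (h.mem_of_forall_arc (fun a ha b hab => not_not.mp fun hb => hS a ha b hb hab) hx)

end KReach

namespace Semicomplete

variable {V : Type*} {A : V → V → Prop}

theorem exists_arc_kReach_two_back (hsemi : Semicomplete A) (hstrong : Strong A) {x : V}
    (hx : ∃ y, y ≠ x) : ∃ a, A x a ∧ KReach A 2 a x := by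
  by_contra! hback
  -- Otherwise no arc leaves `{x} ∪ N⁺(x)`: an arc `a → b` out of it would give `b → x`.
  have hclosed : ∀ a ∈ {b | b = x ∨ A x b}, ∀ b, A a b → b ∈ {b | b = x ∨ A x b} := by
    rintro a (rfl | hxa) b hab
    · exact Or.inr hab
    · refine or_iff_not_imp_left.mpr fun hb => not_not.mp fun hxb => ?_
      have hbx : A b x := (hsemi x b (Ne.symm hb)).resolve_left hxb
      exact hback a hxa (KReach.cons hab (kReach_one_of_arc hbx))
  have hout : ∀ b, b = x ∨ A x b := fun b =>
    let ⟨k, hk⟩ := hstrong x b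
    hk.mem_of_forall_arc hclosed (Or.inl rfl)
  -- So `x` dominates every other vertex, including the tail of the last arc of a walk `y ⇝ x`.
  obtain ⟨y, hy⟩ := hx
  obtain ⟨k, hyx⟩ := hstrong y x
  obtain ⟨a, hax, b, hbx, hab⟩ := hyx.exists_arc_leaving (S := {x}ᶜ) hy (by simp)
  obtain rfl : b = x := by simpa using hbx
  exact hback a ((hout a).resolve_left hax) ((kReach_one_of_arc hab).mono (by norm_num))

theorem exists_isKKing_two [Finite V] [Nonempty V] (hsemi : Semicomplete A)
    (hirr : Irreflexive A) : ∃ x, IsKKing A 2 x := by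
  obtain ⟨x, hmax⟩ := Finite.exists_max (outDeg A)
  refine ⟨x, fun y => ?_⟩
  by_contra hxy
  have hnxy : ¬ A x y := fun h => hxy ((kReach_one_of_arc h).mono (by norm_num))
  have hyx : A y x :=
    (hsemi x y fun h => hxy (h ▸ kReach_refl 2 x)).resolve_left hnxy
  -- A vertex missed by a maximum out-degree vertex `x` would dominate `x` and all of `N⁺(x)`.
  have hsub : {z | A x z} ⊂ {z | A y z} := by
    refine Set.ssubset_iff_of_subset (fun z hxz => ?_) |>.mpr ⟨x, hyx, hirr x⟩
    have hzy : z ≠ y := fun h => hnxy (h ▸ hxz)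
    exact (hsemi y z hzy.symm).resolve_right fun hzy' =>
      hxy (KReach.cons hxz (kReach_one_of_arc hzy'))
  exact (Set.ncard_lt_ncard hsub).not_ge (hmax y)

end Semicomplete

namespace IsComposition

variable {ι W : Type*} {AT : ι → ι → Prop} {AQ : W → W → Prop} {π : W → ι}

theorem kReach_map (hcomp : IsComposition AT AQ π) :
    ∀ {k : ℕ} {x y : W}, KReach AQ k x y → KReach AT k (π x) (π y)
  | 0, _, _, h => kReach_zero_iff.mpr (congrArg π (kReach_zero_iff.mp h))
  | _ + 1, x, _, h => by
    rcases kReach_succ_iff.mp h with rfl | ⟨z, hxz, hzy⟩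
    · exact kReach_refl _ _
    · by_cases hfib : π x = π z
      · exact hfib ▸ (hcomp.kReach_map hzy).mono (Nat.le_succ _)
      · exact KReach.cons ((hcomp.cross x z hfib).mp hxz) (hcomp.kReach_map hzy)

theorem strong (hcomp : IsComposition AT AQ π) (hstrong : Strong AQ) : Strong AT := by
  intro i j
  obtain ⟨x, rfl⟩ := hcomp.surj i
  obtain ⟨y, rfl⟩ := hcomp.surj j
  obtain ⟨k, hk⟩ := hstrong x y
  exact ⟨k, hcomp.kReach_map hk⟩

theorem kReach_lift (hcomp : IsComposition AT AQ π) (hirr : Irreflexive AT) :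
    ∀ {k : ℕ} {x y : W}, π x ≠ π y → KReach AT k (π x) (π y) → KReach AQ k x y
  | 0, _, _, hne, h => absurd (kReach_zero_iff.mp h) hne
  | _ + 1, x, y, hne, h => by
    rcases kReach_succ_iff.mp h with heq | ⟨j, hxj, hjy⟩
    · exact absurd heq hne
    by_cases hj : j = π y
    · subst hj
      exact (kReach_one_of_arc ((hcomp.cross x y hne).mpr hxj)).mono (Nat.le_add_left 1 _)
    · obtain ⟨w, rfl⟩ := hcomp.surj j
      have hxw : π x ≠ π w := fun h => hirr _ (h ▸ hxj)
      exact KReach.cons ((hcomp.cross x w hxw).mpr hxj) (hcomp.kReach_lift hirr hj hjy)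

theorem kReach_three_of_fiber_eq (hcomp : IsComposition AT AQ π) (hirr : Irreflexive AT)
    (hsemi : Semicomplete AT) (hstrong : Strong AT) {x y : W} (hx : ∃ j, j ≠ π x)
    (hxy : π y = π x) : KReach AQ 3 x y := by
  obtain ⟨a, hxa, hax⟩ := hsemi.exists_arc_kReach_two_back hstrong hx
  obtain ⟨w, rfl⟩ := hcomp.surj a
  have hxw : π x ≠ π w := fun h => hirr _ (h ▸ hxa)
  have hwy : π w ≠ π y := hxy ▸ hxw.symm
  exact KReach.cons ((hcomp.cross x w hxw).mpr hxa) (hcomp.kReach_lift hirr hwy (hxy ▸ hax))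

theorem isKKing_iff (hcomp : IsComposition AT AQ π) (hirr : Irreflexive AT)
    (hsemi : Semicomplete AT) (hstrong : Strong AT) {k : ℕ} (hk : 3 ≤ k) {v : W}
    (hv : ∃ j, j ≠ π v) : IsKKing AQ k v ↔ IsKKing AT k (π v) := by
  refine ⟨fun h i => ?_, fun h y => ?_⟩
  · obtain ⟨y, rfl⟩ := hcomp.surj i
    exact hcomp.kReach_map (h y)
  · by_cases hfib : π y = π v
    · exact (hcomp.kReach_three_of_fiber_eq hirr hsemi hstrong hv hfib).mono hk
    · exact hcomp.kReach_lift hirr (Ne.symm hfib) (h (π y))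

end IsComposition

theorem stmt7_general {ι W : Type*} [Fintype ι]
    (AT : ι → ι → Prop) (AQ : W → W → Prop) (π : W → ι)
    (hcard : 2 ≤ Fintype.card ι)
    (hTirr : Irreflexive AT)
    (hsemi : Semicomplete AT) (hcomp : IsComposition AT AQ π)
    (hstrong : Strong AQ) :
    (∀ v : W, IsKKing AQ 3 v ↔ IsKKing AT 3 (π v)) ∧ ∃ v : W, IsKKing AQ 3 v := by
  have hne (i : ι) : ∃ j, j ≠ i := Fintype.exists_ne_of_one_lt_card hcard i
  have hking (v : W) : IsKKing AQ 3 v ↔ IsKKing AT 3 (π v) :=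
    hcomp.isKKing_iff hTirr hsemi (hcomp.strong hstrong) le_rfl (hne (π v))
  have : Nonempty ι := Fintype.card_pos_iff.mp (by omega)
  obtain ⟨c, hc⟩ := hsemi.exists_isKKing_two hTirr
  obtain ⟨v, rfl⟩ := hcomp.surj c
  exact ⟨hking, v, (hking v).mpr fun y => (hc y).mono (by norm_num)⟩

/-- In a strong semicomplete composition, `v ∈ V(H_i)` is a 3-king of `Q` iff `u_i`
is a 3-king of `T`; in particular `Q` has a 3-king. -/
theorem stmt7 {ι W : Type*} [Fintype ι] [Fintype W]
    (AT : ι → ι → Prop) (AQ : W → W → Prop) (π : W → ι)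
    (hcard : 2 ≤ Fintype.card ι)
    (hTirr : Irreflexive AT) (hQirr : Irreflexive AQ)
    (hsemi : Semicomplete AT) (hcomp : IsComposition AT AQ π)
    (hstrong : Strong AQ) :
    (∀ v : W, IsKKing AQ 3 v ↔ IsKKing AT 3 (π v)) ∧ ∃ v : W, IsKKing AQ 3 v :=
  stmt7_general AT AQ π hcard hTirr hsemi hcomp hstrong
end

section
/- Let Q = T[H_1, ..., H_t] be a semicomplete composition and k ≥ 3. If Q contains a k-kernel, then there is a vertex v ∈ V(Q), say v ∈ V(H_i), such that {v} is a (k-1)-absorbent set of the digraph Q − (V(H_i) \ {v}). -/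
namespace KReach

variable {V : Type*} {A : V → V → Prop} {k : ℕ} {x y z : V}

theorem refl (A : V → V → Prop) (k : ℕ) (x : V) : KReach A k x x :=
  ⟨0, Nat.zero_le k, fun _ => x, rfl, rfl, fun _ h => absurd h (Nat.not_lt_zero _)⟩

theorem eq_of_zero (h : KReach A 0 x y) : x = y := by
  obtain ⟨n, hn, f, hf0, hfn, -⟩ := h
  obtain rfl : n = 0 := Nat.le_zero.mp hn
  exact hf0.symm.trans hfn

theorem cons_s17 (hxz : A x z) (h : KReach A k z y) : KReach A (k + 1) x y := by
  obtain ⟨n, hn, f, hf0, hfn, hf⟩ := h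
  refine ⟨n + 1, by omega, fun | 0 => x | j + 1 => f j, rfl, hfn, ?_⟩
  rintro (_ | j) hj
  · simpa [hf0] using hxz
  · exact hf j (by omega)

theorem eq_or_exists_adj (h : KReach A (k + 1) x y) :
    x = y ∨ ∃ z, A x z ∧ KReach A k z y := by
  obtain ⟨_ | n, hn, f, hf0, hfn, hf⟩ := h
  · exact Or.inl (hf0.symm.trans hfn)
  · exact Or.inr ⟨f 1, hf0 ▸ hf 0 (Nat.succ_pos n), n, by omega, fun i => f (i + 1), rfl, hfn,
      fun i hi => hf (i + 1) (by omega)⟩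

theorem of_adj (h : A x y) (hk : 1 ≤ k) : KReach A k x y := by
  obtain ⟨l, rfl⟩ := Nat.exists_eq_add_of_le' hk
  exact cons_s17 h (refl A l y)

end KReach

namespace KKernel

variable {V : Type*} {A : V → V → Prop} {k : ℕ} {K : Set V}

theorem nonempty [Nonempty V] (hK : KKernel A k K) : K.Nonempty := by
  obtain ⟨w⟩ := ‹Nonempty V›
  by_cases hw : w ∈ K
  · exact ⟨w, hw⟩
  · obtain ⟨y, hy, -⟩ := hK.2 w hw
    exact ⟨y, hy⟩

theorem not_adj (hK : KKernel A k K) (hk : 2 ≤ k) {x y : V} (hx : x ∈ K) (hy : y ∈ K)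
    (hxy : x ≠ y) : ¬ A x y := fun h =>
  hK.1 x hx y hy hxy (KReach.of_adj h (by omega))

end KKernel

namespace IsComposition

variable {ι W : Type*} {AT : ι → ι → Prop} {AQ : W → W → Prop} {π : W → ι}

theorem adj_or_adj (hsemi : Semicomplete AT) (hcomp : IsComposition AT AQ π) {x y : W}
    (hxy : π x ≠ π y) : AQ x y ∨ AQ y x :=
  (hsemi _ _ hxy).imp (hcomp.cross x y hxy).2 (hcomp.cross y x (Ne.symm hxy)).2

theorem adj_of_adj_of_fiber_eq (hcomp : IsComposition AT AQ π) {x z v : W} (hxz : AQ x z)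
    (hπxz : π x ≠ π z) (hzv : π z = π v) : AQ x v :=
  (hcomp.cross x v (hzv ▸ hπxz)).2 (hzv ▸ (hcomp.cross x z hπxz).1 hxz)

theorem fiber_eq_of_mem_kKernel (hsemi : Semicomplete AT) (hcomp : IsComposition AT AQ π)
    {k : ℕ} (hk : 2 ≤ k) {K : Set W} (hK : KKernel AQ k K) {x y : W} (hx : x ∈ K)
    (hy : y ∈ K) : π x = π y := by
  by_contra hxy
  have hne : x ≠ y := fun h => hxy (congrArg π h)
  rcases hcomp.adj_or_adj hsemi hxy with h | h
  · exact hK.not_adj hk hx hy hne h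
  · exact hK.not_adj hk hy hx hne.symm h

theorem kReach_delArc_of_fiber_eq (hcomp : IsComposition AT AQ π) (v : W) {k : ℕ} :
    ∀ {x y : W} (hx : π x ≠ π v), KReach AQ k x y → π y = π v →
      KReach (DelArc AQ (fun w => π w = π v → w = v)) k
        ⟨x, fun h => absurd h hx⟩ ⟨v, fun _ => rfl⟩ := by
  induction k with
  | zero =>
    intro x y hx hxy hy
    exact absurd (hxy.eq_of_zero ▸ hy) hx
  | succ k ih =>
    intro x y hx hxy hy
    rcases hxy.eq_or_exists_adj with rfl | ⟨z, hxz, hzy⟩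
    · exact absurd hy hx
    by_cases hz : π z = π v
    · exact KReach.of_adj (hcomp.adj_of_adj_of_fiber_eq hxz (fun h => hx (h.trans hz)) hz)
        (by omega)
    · exact KReach.cons_s17 (z := ⟨z, fun h => absurd h hz⟩) hxz (ih hz hzy hy)

end IsComposition

theorem stmt17_general {ι W : Type*} [Fintype ι] (k : ℕ) (hk : 3 ≤ k)
    (AT : ι → ι → Prop) (AQ : W → W → Prop) (π : W → ι)
    (hcard : 2 ≤ Fintype.card ι)
    (hsemi : Semicomplete AT) (hcomp : IsComposition AT AQ π)
    (hker : ∃ K : Set W, KKernel AQ k K) :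
    ∃ v : W, SingletonAbsorbent
      (DelArc AQ (fun w => π w = π v → w = v)) (k - 1)
      ⟨v, fun _ => rfl⟩ := by
  obtain ⟨K, hK⟩ := hker
  obtain ⟨i⟩ : Nonempty ι := Fintype.card_pos_iff.mp (by omega)
  have : Nonempty W := ⟨(hcomp.surj i).choose⟩
  obtain ⟨v, hv⟩ := hK.nonempty
  have hfiber : ∀ {y}, y ∈ K → π y = π v :=
    fun hy => hcomp.fiber_eq_of_mem_kKernel hsemi (by omega) hK hy hv
  refine ⟨v, fun ⟨x, hx⟩ hxv => ?_⟩
  have hπx : π x ≠ π v := fun h => hxv (Subtype.ext (hx h))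
  obtain ⟨y, hy, hxy⟩ := hK.2 x fun hxK => hπx (hfiber hxK)
  exact hcomp.kReach_delArc_of_fiber_eq v hπx hxy (hfiber hy)

/-- If a semicomplete composition has a `k`-kernel (`k ≥ 3`), then there is a vertex
`v ∈ V(H_i)` such that `{v}` is `(k-1)`-absorbent in `Q − (V(H_i) \ {v})`. -/
theorem stmt17 {ι W : Type*} [Fintype ι] [Fintype W] (k : ℕ) (hk : 3 ≤ k)
    (AT : ι → ι → Prop) (AQ : W → W → Prop) (π : W → ι)
    (hcard : 2 ≤ Fintype.card ι)
    (hTirr : Irreflexive AT) (hQirr : Irreflexive AQ)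
    (hsemi : Semicomplete AT) (hcomp : IsComposition AT AQ π)
    (hker : ∃ K : Set W, KKernel AQ k K) :
    ∃ v : W, SingletonAbsorbent
      (DelArc AQ (fun w => π w = π v → w = v)) (k - 1)
      ⟨v, fun _ => rfl⟩ :=
  stmt17_general k hk AT AQ π hcard hsemi hcomp hker
end
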